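/- arXiv:1212.0506 — 2 statements merged into one kernel-verified Lean document; each statement's English description precedes it below -/
import Mathlib

section
/- Let u ∈ 𝔻[ω]^n be a unit vector, i.e., an n-dimensional column vector with all entries in 𝔻[ω] and with ‖u‖² = Σ_j |u_j|² = 1. Then there exists a finite sequence U₁, ..., U_h of one- and two-level unitary n×n matrices of types X, H, T, and ω such that U₁⋯U_h·u = e₁, the first standard basis vector. -/
noncomputable section

/-- The eighth root of unity `ω = e^{iπ/4} = (1+i)/√2`. -/
def ω : ℂ := (1 + Complex.I) / Real.sqrt 2

/-- A rational number is dyadic if it has the form `a / 2^n` with `a ∈ ℤ`, `n ∈ ℕ`. -/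
def IsDyadic (q : ℚ) : Prop := ∃ (a : ℤ) (n : ℕ), q = a / 2 ^ n

/-- Membership in the ring `𝔻[ω] = ℤ[1/√2, i]`: complex numbers of the form
`aω³ + bω² + cω + d` with `a, b, c, d` dyadic rationals. -/
def inDω (t : ℂ) : Prop :=
  ∃ a b c d : ℚ, IsDyadic a ∧ IsDyadic b ∧ IsDyadic c ∧ IsDyadic d ∧
    t = (a : ℂ) * ω ^ 3 + (b : ℂ) * ω ^ 2 + (c : ℂ) * ω + (d : ℂ)

/-- Membership in the ring `ℤ[ω]`: complex numbers of the form
`aω³ + bω² + cω + d` with `a, b, c, d ∈ ℤ`. -/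
def inZω (t : ℂ) : Prop :=
  ∃ a b c d : ℤ, t = (a : ℂ) * ω ^ 3 + (b : ℂ) * ω ^ 2 + (c : ℂ) * ω + (d : ℂ)

/-- The Hadamard gate. -/
def Hmat : Matrix (Fin 2) (Fin 2) ℂ := ((Real.sqrt 2 : ℂ))⁻¹ • !![1, 1; 1, -1]

/-- The phase gate `S`. -/
def Smat : Matrix (Fin 2) (Fin 2) ℂ := !![1, 0; 0, Complex.I]

/-- The `T` gate. -/
def Tmat : Matrix (Fin 2) (Fin 2) ℂ := !![1, 0; 0, ω]

/-- The `X` (not) gate. -/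
def Xmat : Matrix (Fin 2) (Fin 2) ℂ := !![0, 1; 1, 0]

/-- The controlled-not gate, as a matrix on two qubits: it sends `|a,b⟩` to `|a, a+b⟩`. -/
def CNOTmat : Matrix (Fin 2 × Fin 2) (Fin 2 × Fin 2) ℂ :=
  Matrix.of fun p q => if p.1 = q.1 ∧ p.2 = q.1 + q.2 then 1 else 0

/-- The one-level `n×n` matrix `a_[j]` of type `a`: the identity except that the `(j,j)`
entry is `a`. -/
def oneLevel {n : ℕ} (a : ℂ) (j : Fin n) : Matrix (Fin n) (Fin n) ℂ :=
  Matrix.of fun p q => if p = q then (if p = j then a else 1) else 0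

/-- The two-level `n×n` matrix `U_[j,l]` of type `U`: the identity except that the
`(j,j), (j,l), (l,j), (l,l)` entries are those of the `2×2` matrix `U`. -/
def twoLevel {n : ℕ} (U : Matrix (Fin 2) (Fin 2) ℂ) (j l : Fin n) :
    Matrix (Fin n) (Fin n) ℂ :=
  Matrix.of fun p q =>
    if p = j ∧ q = j then U 0 0
    else if p = j ∧ q = l then U 0 1
    else if p = l ∧ q = j then U 1 0
    else if p = l ∧ q = l then U 1 1
    else if p = q then 1 else 0

/-- A one- or two-level matrix of type `X`, `H`, `T` (two-level) or `ω` (one-level). -/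
def IsLevelGen {n : ℕ} (M : Matrix (Fin n) (Fin n) ℂ) : Prop :=
  (∃ j l : Fin n, j ≠ l ∧
      (M = twoLevel Xmat j l ∨ M = twoLevel Hmat j l ∨ M = twoLevel Tmat j l))
  ∨ (∃ j : Fin n, M = oneLevel ω j)


/-!
Write `u = w / √2 ^ k` with `w ∈ ℤ[ω]ⁿ`. Since `√2` is irrational, `∑ |u_j|² = 1` becomes the
identity `∑ N(w_j) = 2 ^ k` in `ℤ[√2]`, where `N(x) = x x̄`. An entry `x` is divisible by `√2`
exactly when `N(x) ≡ 0 (mod 2)`; otherwise `N(x) ≡ 1` or `N(x) ≡ √2`. For `k > 0` the sum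
`∑ N(w_j)` is even, so the entries not divisible by `√2` pair up with congruent norms. For such a
pair `(x, y)` the residues mod 2 give an `m` with `x ≡ ω^m y` or `x + ω^m y ≡ 1 + ω + ω² + ω³`;
the gates `H T^m` replace the pair by `(x ± ω^m y) / √2`, which in the first case are both
divisible by `√2`, and in the second case form a pair of the first kind. Once every entry is
divisible by `√2`, the exponent `k` drops by one. At `k = 0` a single entry is nonzero and is a
power of `ω`, which `ω`- and `X`-gates move to `e₁`.
-/

open Function Matrix

lemma ofReal_sqrt_two_sq : (Real.sqrt 2 : ℂ) ^ 2 = 2 := by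
  rw [← Complex.ofReal_pow, Real.sq_sqrt zero_le_two]
  norm_num

lemma omega_sq : ω ^ 2 = Complex.I := by
  rw [ω, div_pow, ofReal_sqrt_two_sq, div_eq_iff two_ne_zero]
  linear_combination Complex.I_sq

lemma omega_pow_four : ω ^ 4 = -1 := by
  rw [show ω ^ 4 = (ω ^ 2) ^ 2 by ring, omega_sq, Complex.I_sq]

lemma ofReal_sqrt_two_eq_omega_sub : (Real.sqrt 2 : ℂ) = ω - ω ^ 3 := by
  have h0 : (Real.sqrt 2 : ℂ) ≠ 0 := by simp
  rw [show ω ^ 3 = ω ^ 2 * ω by ring, omega_sq, ω]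
  field_simp
  linear_combination Complex.I_sq + ofReal_sqrt_two_sq

lemma Zsqrtd.re_sum {d : ℤ} {ι : Type*} (s : Finset ι) (f : ι → ℤ√d) :
    (∑ i ∈ s, f i).re = ∑ i ∈ s, (f i).re :=
  map_sum (⟨⟨Zsqrtd.re, rfl⟩, Zsqrtd.re_add⟩ : ℤ√d →+ ℤ) f s

lemma Zsqrtd.im_sum {d : ℤ} {ι : Type*} (s : Finset ι) (f : ι → ℤ√d) :
    (∑ i ∈ s, f i).im = ∑ i ∈ s, (f i).im :=
  map_sum (⟨⟨Zsqrtd.im, rfl⟩, Zsqrtd.im_add⟩ : ℤ√d →+ ℤ) f s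

def sqrtTwoEmbedding : ℤ√2 →+* ℝ :=
  Zsqrtd.lift ⟨Real.sqrt 2, by rw [Real.mul_self_sqrt zero_le_two]; norm_num⟩

lemma sqrtTwoEmbedding_injective : Injective sqrtTwoEmbedding :=
  Zsqrtd.lift_injective _ fun m hm => by
    have hm2 : m ^ 2 = 2 := by linear_combination -hm
    obtain ⟨hlo, hhi⟩ : -2 < m ∧ m < 2 := ⟨by nlinarith, by nlinarith⟩
    interval_cases m <;> norm_num at hm2

lemma Fintype.sum_comp_update_update {ι α M : Type*} [Fintype ι] [DecidableEq ι]
    [AddCommGroup M] (g : α → M) (f : ι → α) {j l : ι} (hjl : j ≠ l) {b c : α}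
    (h : g b + g c = g (f j) + g (f l)) :
    ∑ p, g (update (update f j b) l c p) = ∑ p, g (f p) := by
  rw [← sub_eq_zero, ← Finset.sum_sub_distrib,
    Fintype.sum_eq_add j l hjl (fun p hp => by simp [hp.1, hp.2])]
  simp [hjl, sub_add_sub_comm, h]

lemma Fintype.exists_eq_one_of_sum_eq_one {ι : Type*} [Fintype ι] [DecidableEq ι] (f : ι → ℤ)
    (hf : ∀ i, 0 ≤ f i) (h : ∑ i, f i = 1) : ∃ j, f j = 1 ∧ ∀ i ≠ j, f i = 0 := by
  obtain ⟨j, hj⟩ : ∃ j, f j ≠ 0 := by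
    by_contra! h0
    simp [h0] at h
  have hsplit := Finset.add_sum_erase Finset.univ f (Finset.mem_univ j)
  have hrest : 0 ≤ ∑ i ∈ Finset.univ.erase j, f i := Finset.sum_nonneg fun i _ => hf i
  have hj1 : f j = 1 := by have := hf j; omega
  refine ⟨j, hj1, fun i hi => ?_⟩
  have hzero : ∑ i ∈ Finset.univ.erase j, f i = 0 := by omega
  exact (Finset.sum_eq_zero_iff_of_nonneg fun i _ => hf i).1 hzero i (by simp [hi])

lemma ZMod.exists_ne_eq_one_of_sum_eq_zero {ι : Type*} [Fintype ι] (f : ι → ZMod 2)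
    (hsum : ∑ i, f i = 0) {j : ι} (hj : f j = 1) : ∃ l ≠ j, f l = 1 := by
  by_contra! H
  have hzero : ∀ l ≠ j, f l = 0 := fun l hl => by
    have := H l hl
    generalize f l = x at this ⊢
    revert x
    decide
  rw [Fintype.sum_eq_single j hzero, hj] at hsum
  exact one_ne_zero hsum

lemma ZMod.exists_ne_eq_of_sum_eq_zero {ι : Type*} [Fintype ι] (f : ι → ZMod 2 × ZMod 2)
    (hsum : ∑ i, f i = 0) (hf : ∀ i, f i ≠ (1, 1)) {j : ι} (hj : f j ≠ 0) :
    ∃ l ≠ j, f l = f j := by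
  have hcases : ∀ p : ZMod 2 × ZMod 2, p ≠ 0 → p ≠ (1, 1) → p = (1, 0) ∨ p = (0, 1) := by
    decide
  have hfst : ∀ p : ZMod 2 × ZMod 2, p ≠ (1, 1) → p.1 = 1 → p = (1, 0) := by decide
  have hsnd : ∀ p : ZMod 2 × ZMod 2, p ≠ (1, 1) → p.2 = 1 → p = (0, 1) := by decide
  rcases hcases _ hj (hf j) with h | h
  · obtain ⟨l, hl, hl1⟩ := exists_ne_eq_one_of_sum_eq_zero (fun i => (f i).1)
      (by rw [← Prod.fst_sum, hsum]; rfl) (by rw [h])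
    exact ⟨l, hl, (hfst _ (hf l) hl1).trans h.symm⟩
  · obtain ⟨l, hl, hl1⟩ := exists_ne_eq_one_of_sum_eq_zero (fun i => (f i).2)
      (by rw [← Prod.snd_sum, hsum]; rfl) (by rw [h])
    exact ⟨l, hl, (hsnd _ (hf l) hl1).trans h.symm⟩

lemma IsDyadic.exists_mul_two_pow_eq {q : ℚ} (hq : IsDyadic q) :
    ∃ e : ℕ, ∀ M ≥ e, ∃ z : ℤ, (q : ℂ) * 2 ^ M = z := by
  obtain ⟨a, e, rfl⟩ := hq
  refine ⟨e, fun M hM => ?_⟩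
  obtain ⟨d, rfl⟩ := Nat.exists_eq_add_of_le hM
  refine ⟨a * 2 ^ d, ?_⟩
  push_cast
  field_simp
  ring

section Gates

variable {n : ℕ}

def GateReach (v v' : Fin n → ℂ) : Prop :=
  Relation.ReflTransGen (fun v v' => ∃ M, IsLevelGen M ∧ M *ᵥ v = v') v v'

lemma GateReach.refl (v : Fin n → ℂ) : GateReach v v := Relation.ReflTransGen.refl

lemma GateReach.trans {v v' v'' : Fin n → ℂ} (h : GateReach v v') (h' : GateReach v' v'') :
    GateReach v v'' :=
  Relation.ReflTransGen.trans h h'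

lemma GateReach.exists_list {v v' : Fin n → ℂ} (h : GateReach v v') :
    ∃ L : List (Matrix (Fin n) (Fin n) ℂ), (∀ M ∈ L, IsLevelGen M) ∧ L.prod *ᵥ v = v' := by
  induction h with
  | refl => exact ⟨[], by simp, by simp⟩
  | tail _ hstep ih =>
    obtain ⟨M, hM, rfl⟩ := hstep
    obtain ⟨L, hL, rfl⟩ := ih
    refine ⟨M :: L, ?_, by simp [Matrix.mulVec_mulVec]⟩
    simpa [hM] using hL

lemma twoLevel_mulVec (U : Matrix (Fin 2) (Fin 2) ℂ) {j l : Fin n} (hjl : j ≠ l)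
    (v : Fin n → ℂ) :
    twoLevel U j l *ᵥ v =
      update (update v j (U 0 0 * v j + U 0 1 * v l)) l (U 1 0 * v j + U 1 1 * v l) := by
  ext p
  simp only [Matrix.mulVec, dotProduct, twoLevel, Matrix.of_apply]
  by_cases hpj : p = j
  · subst hpj
    rw [Fintype.sum_eq_add p l hjl (fun x hx => by simp [hx.1, hx.2, Ne.symm hx.1])]
    simp [hjl, hjl.symm]
  by_cases hpl : p = l
  · subst hpl
    rw [Fintype.sum_eq_add j p hjl (fun x hx => by simp [hx.1, hx.2, Ne.symm hx.2])]
    simp [hjl, hjl.symm]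
  · rw [Fintype.sum_eq_single p (fun x hx => by simp [hpj, hpl, Ne.symm hx])]
    simp [hpj, hpl]

lemma oneLevel_mulVec (a : ℂ) (j : Fin n) (v : Fin n → ℂ) :
    oneLevel a j *ᵥ v = update v j (a * v j) := by
  ext p
  simp only [Matrix.mulVec, dotProduct, oneLevel, Matrix.of_apply]
  rw [Fintype.sum_eq_single p (fun x hx => by simp [Ne.symm hx])]
  by_cases hpj : p = j <;> simp [hpj]

lemma gateReach_update_omega_pow (j : Fin n) (m : ℕ) (v : Fin n → ℂ) :
    GateReach v (update v j (ω ^ m * v j)) := by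
  induction m with
  | zero => simpa using GateReach.refl v
  | succ m ih =>
    refine ih.tail ⟨oneLevel ω j, Or.inr ⟨j, rfl⟩, ?_⟩
    rw [oneLevel_mulVec, update_idem, update_self, pow_succ', mul_assoc]

lemma gateReach_update_T_pow {j l : Fin n} (hjl : j ≠ l) (m : ℕ) (v : Fin n → ℂ) :
    GateReach v (update v l (ω ^ m * v l)) := by
  induction m with
  | zero => simpa using GateReach.refl v
  | succ m ih =>
    refine ih.tail ⟨twoLevel Tmat j l, Or.inl ⟨j, l, hjl, Or.inr (Or.inr rfl)⟩, ?_⟩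
    rw [twoLevel_mulVec _ hjl]
    simp [Tmat, update_of_ne hjl, update_comm hjl.symm, pow_succ', mul_assoc]

lemma gateReach_hadamard_T_pow {j l : Fin n} (hjl : j ≠ l) (m : ℕ) (v : Fin n → ℂ) :
    GateReach v (update (update v j ((v j + ω ^ m * v l) / Real.sqrt 2)) l
      ((v j - ω ^ m * v l) / Real.sqrt 2)) := by
  refine (gateReach_update_T_pow hjl m v).tail
    ⟨twoLevel Hmat j l, Or.inl ⟨j, l, hjl, Or.inr (Or.inl rfl)⟩, ?_⟩
  rw [twoLevel_mulVec _ hjl]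
  simp [Hmat, update_of_ne hjl, update_comm hjl.symm, div_eq_inv_mul, mul_add, sub_eq_add_neg]

lemma gateReach_swap {j l : Fin n} (hjl : j ≠ l) (v : Fin n → ℂ) :
    GateReach v (update (update v j (v l)) l (v j)) :=
  .single ⟨twoLevel Xmat j l, Or.inl ⟨j, l, hjl, Or.inl rfl⟩, by simp [twoLevel_mulVec _ hjl, Xmat]⟩

end Gates

/-- `⟨a, b, c, d⟩` stands for `a ω³ + b ω² + c ω + d`, as in `inZω`. -/
@[ext]
structure ZOmega where
  a : ℤ
  b : ℤ
  c : ℤ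
  d : ℤ

namespace ZOmega

instance : Add ZOmega := ⟨fun x y => ⟨x.a + y.a, x.b + y.b, x.c + y.c, x.d + y.d⟩⟩
instance : Sub ZOmega := ⟨fun x y => ⟨x.a - y.a, x.b - y.b, x.c - y.c, x.d - y.d⟩⟩

lemma add_def (x y : ZOmega) : x + y = ⟨x.a + y.a, x.b + y.b, x.c + y.c, x.d + y.d⟩ := rfl
lemma sub_def (x y : ZOmega) : x - y = ⟨x.a - y.a, x.b - y.b, x.c - y.c, x.d - y.d⟩ := rfl

def toC (x : ZOmega) : ℂ := x.a * ω ^ 3 + x.b * ω ^ 2 + x.c * ω + x.d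

def mulOmega (x : ZOmega) : ZOmega := ⟨x.b, x.c, x.d, -x.a⟩

/-- Via `√2 = ω - ω³`. -/
def mulSqrt2 (x : ZOmega) : ZOmega := ⟨x.b - x.d, x.a + x.c, x.b + x.d, x.c - x.a⟩

/-- `x x̄ ∈ ℤ[√2]`, see `normSq_toC`. -/
def norm (x : ZOmega) : ℤ√2 :=
  ⟨x.a ^ 2 + x.b ^ 2 + x.c ^ 2 + x.d ^ 2, x.a * x.b + x.b * x.c + x.c * x.d - x.d * x.a⟩

lemma toC_add (x y : ZOmega) : toC (x + y) = toC x + toC y := by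
  simp only [toC, add_def]
  push_cast
  ring

lemma toC_sub (x y : ZOmega) : toC (x - y) = toC x - toC y := by
  simp only [toC, sub_def]
  push_cast
  ring

lemma toC_mulOmega (x : ZOmega) : toC (mulOmega x) = ω * toC x := by
  simp only [toC, mulOmega]
  push_cast
  linear_combination (-(x.a : ℂ)) * omega_pow_four

lemma toC_mulOmega_iterate (m : ℕ) (x : ZOmega) : toC (mulOmega^[m] x) = ω ^ m * toC x := by
  induction m with
  | zero => simp
  | succ m ih => rw [iterate_succ_apply', toC_mulOmega, ih, pow_succ']; ring

lemma toC_mulSqrt2 (x : ZOmega) : toC (mulSqrt2 x) = Real.sqrt 2 * toC x := by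
  simp only [toC, mulSqrt2, ofReal_sqrt_two_eq_omega_sub]
  push_cast
  linear_combination ((x.a : ℂ) * ω ^ 2 + x.b * ω + (x.c - x.a)) * omega_pow_four

lemma toC_eq_re_add_im (x : ZOmega) :
    toC x = ((x.d + (x.c - x.a) / Real.sqrt 2 : ℝ) : ℂ)
      + ((x.b + (x.a + x.c) / Real.sqrt 2 : ℝ) : ℂ) * Complex.I := by
  have h0 : (Real.sqrt 2 : ℂ) ≠ 0 := by simp
  rw [toC, show ω ^ 3 = ω ^ 2 * ω by ring, omega_sq, ω]
  push_cast
  field_simp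
  linear_combination (x.a : ℂ) * Complex.I_sq

lemma normSq_toC (x : ZOmega) : Complex.normSq (toC x) = sqrtTwoEmbedding (norm x) := by
  have h : Real.sqrt 2 ^ 2 = 2 := Real.sq_sqrt zero_le_two
  rw [toC_eq_re_add_im, Complex.normSq_add_mul_I]
  simp only [sqrtTwoEmbedding, Zsqrtd.lift_apply_apply, norm]
  push_cast
  field_simp
  ring_nf
  rw [h, show Real.sqrt 2 ^ 3 = Real.sqrt 2 ^ 2 * Real.sqrt 2 by ring, h]
  ring

lemma norm_mulOmega_iterate (m : ℕ) (x : ZOmega) : norm (mulOmega^[m] x) = norm x := by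
  induction m with
  | zero => rfl
  | succ m ih =>
    rw [iterate_succ_apply', ← ih]
    ext <;> simp only [norm, mulOmega] <;> ring

lemma norm_mulSqrt2 (x : ZOmega) : norm (mulSqrt2 x) = 2 * norm x := by
  ext <;> simp [norm, mulSqrt2] <;> ring

lemma norm_add_add_norm_sub (x y : ZOmega) :
    norm (x + y) + norm (x - y) = 2 * norm x + 2 * norm y := by
  ext <;> simp [norm, add_def, sub_def] <;> ring

lemma toC_eq_zero_of_norm_re_eq_zero {x : ZOmega} (h : (norm x).re = 0) : toC x = 0 := by
  obtain ⟨a, b, c, d⟩ := x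
  simp only [norm] at h
  obtain ⟨rfl, rfl, rfl, rfl⟩ : a = 0 ∧ b = 0 ∧ c = 0 ∧ d = 0 := by
    refine ⟨?_, ?_, ?_, ?_⟩ <;> nlinarith [sq_nonneg a, sq_nonneg b, sq_nonneg c, sq_nonneg d]
  simp [toC]

lemma exists_omega_pow_mul_toC_eq_one {x : ZOmega} (h : (norm x).re = 1) :
    ∃ m : ℕ, ω ^ m * toC x = 1 := by
  suffices ∃ m : ℕ, mulOmega^[m] x = ⟨0, 0, 0, 1⟩ by
    obtain ⟨m, hm⟩ := this
    exact ⟨m, by rw [← toC_mulOmega_iterate, hm]; simp [toC]⟩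
  obtain ⟨a, b, c, d⟩ := x
  simp only [norm] at h
  obtain ⟨ha, ha'⟩ : -1 ≤ a ∧ a ≤ 1 := ⟨by nlinarith, by nlinarith⟩
  obtain ⟨hb, hb'⟩ : -1 ≤ b ∧ b ≤ 1 := ⟨by nlinarith, by nlinarith⟩
  obtain ⟨hc, hc'⟩ : -1 ≤ c ∧ c ≤ 1 := ⟨by nlinarith, by nlinarith⟩
  obtain ⟨hd, hd'⟩ : -1 ≤ d ∧ d ≤ 1 := ⟨by nlinarith, by nlinarith⟩
  interval_cases a <;> interval_cases b <;> interval_cases c <;> interval_cases d <;>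
    norm_num at h <;>
    first
    | exact ⟨0, rfl⟩ | exact ⟨1, rfl⟩ | exact ⟨2, rfl⟩ | exact ⟨3, rfl⟩
    | exact ⟨4, rfl⟩ | exact ⟨5, rfl⟩ | exact ⟨6, rfl⟩ | exact ⟨7, rfl⟩

lemma exists_mul_two_pow_eq_toC {t : ℂ} (ht : inDω t) :
    ∃ e : ℕ, ∀ M ≥ e, ∃ x : ZOmega, t * 2 ^ M = toC x := by
  obtain ⟨a, b, c, d, ha, hb, hc, hd, rfl⟩ := ht
  obtain ⟨ea, ha⟩ := ha.exists_mul_two_pow_eq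
  obtain ⟨eb, hb⟩ := hb.exists_mul_two_pow_eq
  obtain ⟨ec, hc⟩ := hc.exists_mul_two_pow_eq
  obtain ⟨ed, hd⟩ := hd.exists_mul_two_pow_eq
  refine ⟨max (max ea eb) (max ec ed), fun M hM => ?_⟩
  obtain ⟨za, hza⟩ := ha M (by omega)
  obtain ⟨zb, hzb⟩ := hb M (by omega)
  obtain ⟨zc, hzc⟩ := hc M (by omega)
  obtain ⟨zd, hzd⟩ := hd M (by omega)
  exact ⟨⟨za, zb, zc, zd⟩, by
    simp only [toC]
    linear_combination ω ^ 3 * hza + ω ^ 2 * hzb + ω * hzc + hzd⟩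

/-- Residues of the coordinates mod 2, i.e. elements of `ℤ[ω] / 2ℤ[ω]`. -/
abbrev Res := ZMod 2 × ZMod 2 × ZMod 2 × ZMod 2

namespace Res

def rot : Res → Res
  | (a, b, c, d) => (b, c, d, a)

def mulSqrt2 : Res → Res
  | (a, b, c, d) => (b + d, a + c, b + d, a + c)

def normParity : Res → ZMod 2 × ZMod 2
  | (a, b, c, d) => (a + b + c + d, (a + c) * (b + d))

lemma normParity_ne_one_one : ∀ r : Res, normParity r ≠ (1, 1) := by decide

lemma sqrt2Dvd_of_normParity_eq_zero :
    ∀ r : Res, normParity r = 0 → r.1 + r.2.2.1 = 0 ∧ r.2.1 + r.2.2.2 = 0 := by decide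

lemma normParity_eq_zero_of_mulSqrt2_eq_zero :
    ∀ r : Res, mulSqrt2 r = 0 → normParity r = 0 := by decide

lemma normParity_eq_of_mulSqrt2_eq_one : ∀ r : Res, mulSqrt2 r = 1 → normParity r = (0, 1) := by
  decide

lemma exists_rot_pow_eq : ∀ r s : Res, normParity r ≠ 0 → normParity r = normParity s →
    ∃ m : Fin 4, r = rot^[m] s ∨ (normParity r = (1, 0) ∧ r + rot^[m] s = 1) := by
  decide

end Res

def res (x : ZOmega) : Res := (x.a, x.b, x.c, x.d)

lemma res_add (x y : ZOmega) : res (x + y) = res x + res y := by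
  simp [res, add_def]

lemma res_sub (x y : ZOmega) : res (x - y) = res x + res y := by
  simp [res, sub_def, CharTwo.sub_eq_add]

lemma res_mulOmega_iterate (m : ℕ) (x : ZOmega) : res (mulOmega^[m] x) = Res.rot^[m] (res x) := by
  induction m with
  | zero => rfl
  | succ m ih =>
    rw [iterate_succ_apply', iterate_succ_apply', ← ih]
    simp [res, mulOmega, Res.rot, ZMod.neg_eq_self_mod_two]

lemma res_mulSqrt2 (x : ZOmega) : res (mulSqrt2 x) = (res x).mulSqrt2 := by
  simp [res, mulSqrt2, Res.mulSqrt2, CharTwo.sub_eq_add, add_comm]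

lemma normParity_res (x : ZOmega) :
    (res x).normParity = (((norm x).re : ZMod 2), ((norm x).im : ZMod 2)) := by
  have h2 : (2 : ZMod 2) = 0 := rfl
  simp only [res, Res.normParity, norm]
  push_cast
  simp only [ZMod.pow_card]
  ext
  · ring
  · linear_combination (x.d * x.a : ZMod 2) * h2

lemma exists_eq_mulSqrt2 {x : ZOmega} (h : (res x).normParity = 0) : ∃ y, x = mulSqrt2 y := by
  obtain ⟨hac, hbd⟩ := Res.sqrt2Dvd_of_normParity_eq_zero _ h
  have hac' : (2 : ℤ) ∣ x.a + x.c :=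
    (ZMod.intCast_zmod_eq_zero_iff_dvd _ 2).1 (by push_cast; exact hac)
  have hbd' : (2 : ℤ) ∣ x.b + x.d :=
    (ZMod.intCast_zmod_eq_zero_iff_dvd _ 2).1 (by push_cast; exact hbd)
  exact ⟨⟨(x.b - x.d) / 2, (x.a + x.c) / 2, (x.b + x.d) / 2, (x.c - x.a) / 2⟩,
    by ext <;> simp only [mulSqrt2] <;> omega⟩

variable {n : ℕ}

lemma sum_normParity_eq_zero {w : Fin n → ZOmega} (hw : (2 : ℤ√2) ∣ ∑ p, norm (w p)) :
    ∑ p, (res (w p)).normParity = 0 := by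
  rw [show (2 : ℤ√2) = ((2 : ℤ) : ℤ√2) from rfl, Zsqrtd.intCast_dvd, Zsqrtd.re_sum,
    Zsqrtd.im_sum] at hw
  simp only [normParity_res]
  ext
  · rw [Prod.fst_sum]
    push_cast [← Int.cast_sum]
    exact (ZMod.intCast_zmod_eq_zero_iff_dvd _ 2).2 hw.1
  · rw [Prod.snd_sum]
    push_cast [← Int.cast_sum]
    exact (ZMod.intCast_zmod_eq_zero_iff_dvd _ 2).2 hw.2

lemma exists_ne_normParity_eq {w : Fin n → ZOmega} (hw : (2 : ℤ√2) ∣ ∑ p, norm (w p)) {j : Fin n}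
    (hj : (res (w j)).normParity ≠ 0) :
    ∃ l ≠ j, (res (w l)).normParity = (res (w j)).normParity :=
  ZMod.exists_ne_eq_of_sum_eq_zero _ (sum_normParity_eq_zero hw)
    (fun _ => Res.normParity_ne_one_one _) hj

def scaledVec (k : ℕ) (w : Fin n → ZOmega) : Fin n → ℂ :=
  (fun x => toC x / Real.sqrt 2 ^ k) ∘ w

lemma scaledVec_update (k : ℕ) (w : Fin n → ZOmega) (j : Fin n) (x : ZOmega) :
    scaledVec k (update w j x) = update (scaledVec k w) j (toC x / Real.sqrt 2 ^ k) :=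
  comp_update _ _ _ _

lemma exists_eq_scaledVec {u : Fin n → ℂ} (hu : ∀ j, inDω (u j)) :
    ∃ (k : ℕ) (w : Fin n → ZOmega), u = scaledVec k w := by
  choose e he using fun j => exists_mul_two_pow_eq_toC (hu j)
  let M := Finset.univ.sup e
  choose w hw using fun j => he j M (Finset.le_sup (Finset.mem_univ j))
  refine ⟨2 * M, w, funext fun j => ?_⟩
  have h2 : (Real.sqrt 2 : ℂ) ^ (2 * M) = 2 ^ M := by rw [pow_mul, ofReal_sqrt_two_sq]
  simp only [scaledVec, Function.comp_apply, h2, ← hw j]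
  field_simp

lemma sum_norm_eq_two_pow {k : ℕ} {w : Fin n → ZOmega}
    (h : ∑ p, Complex.normSq (scaledVec k w p) = 1) : ∑ p, norm (w p) = 2 ^ k := by
  apply sqrtTwoEmbedding_injective
  have h2 : Complex.normSq ((Real.sqrt 2 : ℂ) ^ k) = 2 ^ k := by
    rw [map_pow, Complex.normSq_ofReal, Real.mul_self_sqrt zero_le_two]
  simp only [scaledVec, Function.comp_apply, Complex.normSq_div, h2, normSq_toC,
    ← Finset.sum_div] at h
  rw [div_eq_one_iff_eq (by positivity)] at h
  simpa [map_sum, map_ofNat] using h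

def Moves (k : ℕ) (w w' : Fin n → ZOmega) : Prop :=
  GateReach (scaledVec k w) (scaledVec k w') ∧ ∑ p, norm (w' p) = ∑ p, norm (w p)

lemma Moves.refl (k : ℕ) (w : Fin n → ZOmega) : Moves k w w := ⟨.refl _, rfl⟩

lemma Moves.trans {k : ℕ} {w w' w'' : Fin n → ZOmega} (h : Moves k w w') (h' : Moves k w' w'') :
    Moves k w w'' :=
  ⟨h.1.trans h'.1, h'.2.trans h.2⟩

lemma moves_hadamard_T_pow (k : ℕ) {w : Fin n → ZOmega} {j l : Fin n} (hjl : j ≠ l) (m : ℕ)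
    {y y' : ZOmega} (hy : w j + mulOmega^[m] (w l) = mulSqrt2 y)
    (hy' : w j - mulOmega^[m] (w l) = mulSqrt2 y') :
    Moves k w (update (update w j y) l y') := by
  constructor
  · have h0 : (Real.sqrt 2 : ℂ) ≠ 0 := by simp
    have hc := congrArg toC hy
    have hc' := congrArg toC hy'
    rw [toC_add, toC_mulOmega_iterate, toC_mulSqrt2] at hc
    rw [toC_sub, toC_mulOmega_iterate, toC_mulSqrt2] at hc'
    have hA : toC y / Real.sqrt 2 ^ k
        = (scaledVec k w j + ω ^ m * scaledVec k w l) / Real.sqrt 2 := by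
      simp only [scaledVec, Function.comp_apply]
      field_simp
      linear_combination -hc
    have hB : toC y' / Real.sqrt 2 ^ k
        = (scaledVec k w j - ω ^ m * scaledVec k w l) / Real.sqrt 2 := by
      simp only [scaledVec, Function.comp_apply]
      field_simp
      linear_combination -hc'
    rw [scaledVec_update, scaledVec_update, hA, hB]
    exact gateReach_hadamard_T_pow hjl m _
  · apply Fintype.sum_comp_update_update _ _ hjl
    have h := norm_add_add_norm_sub (w j) (mulOmega^[m] (w l))
    rw [hy, hy', norm_mulSqrt2, norm_mulSqrt2, norm_mulOmega_iterate] at h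
    simp only [Zsqrtd.ext_iff, Zsqrtd.re_add, Zsqrtd.im_add, Zsqrtd.re_mul, Zsqrtd.im_mul,
      Zsqrtd.re_ofNat, Zsqrtd.im_ofNat] at h ⊢
    omega

lemma exists_moves_hadamard_T_pow (k : ℕ) {w : Fin n → ZOmega} {j l : Fin n} (hjl : j ≠ l)
    (m : ℕ) (h : (res (w j) + res (mulOmega^[m] (w l))).normParity = 0) :
    ∃ y y', Moves k w (update (update w j y) l y') ∧
      (res y).mulSqrt2 = res (w j) + res (mulOmega^[m] (w l)) ∧
      (res y').mulSqrt2 = res (w j) + res (mulOmega^[m] (w l)) := by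
  obtain ⟨y, hy⟩ := exists_eq_mulSqrt2 (x := w j + mulOmega^[m] (w l)) (by rwa [res_add])
  obtain ⟨y', hy'⟩ := exists_eq_mulSqrt2 (x := w j - mulOmega^[m] (w l)) (by rwa [res_sub])
  refine ⟨y, y', moves_hadamard_T_pow k hjl m hy hy', ?_, ?_⟩
  · rw [← res_mulSqrt2, ← hy, res_add]
  · rw [← res_mulSqrt2, ← hy', res_sub]

lemma exists_moves_of_res_eq (k : ℕ) {w : Fin n → ZOmega} {j l : Fin n} (hjl : j ≠ l) (m : ℕ)
    (h : res (w j) = res (mulOmega^[m] (w l))) :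
    ∃ y y', Moves k w (update (update w j y) l y') ∧
      (res y).normParity = 0 ∧ (res y').normParity = 0 := by
  obtain ⟨y, y', hmv, hy, hy'⟩ :=
    exists_moves_hadamard_T_pow k hjl m (by rw [h, CharTwo.add_self_eq_zero]; rfl)
  rw [h, CharTwo.add_self_eq_zero] at hy hy'
  exact ⟨y, y', hmv, Res.normParity_eq_zero_of_mulSqrt2_eq_zero _ hy,
    Res.normParity_eq_zero_of_mulSqrt2_eq_zero _ hy'⟩

lemma exists_moves_pair (k : ℕ) {w : Fin n → ZOmega} {j l : Fin n} (hjl : j ≠ l)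
    (hne : (res (w j)).normParity ≠ 0) (heq : (res (w j)).normParity = (res (w l)).normParity) :
    ∃ y y', Moves k w (update (update w j y) l y') ∧
      (res y).normParity = 0 ∧ (res y').normParity = 0 := by
  obtain ⟨m, hm | ⟨-, hm⟩⟩ := Res.exists_rot_pow_eq _ _ hne heq
  · exact exists_moves_of_res_eq k hjl m (by rw [res_mulOmega_iterate, hm])
  obtain ⟨y, y', hmv, hy, hy'⟩ :=
    exists_moves_hadamard_T_pow k hjl m (by rw [res_mulOmega_iterate, hm]; rfl)
  rw [res_mulOmega_iterate, hm] at hy hy'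
  have hpy := Res.normParity_eq_of_mulSqrt2_eq_one _ hy
  have hpy' := Res.normParity_eq_of_mulSqrt2_eq_one _ hy'
  obtain ⟨m', hm' | ⟨hcontra, -⟩⟩ :=
    Res.exists_rot_pow_eq (res y) (res y') (by rw [hpy]; decide) (by rw [hpy, hpy'])
  · obtain ⟨z, z', hmv', hz, hz'⟩ := exists_moves_of_res_eq k (w := update (update w j y) l y')
      hjl m' (by simpa [update_of_ne hjl, res_mulOmega_iterate] using hm')
    refine ⟨z, z', hmv.trans ?_, hz, hz'⟩
    rwa [update_comm hjl.symm, update_idem, update_idem] at hmv'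
  · rw [hpy] at hcontra
    exact absurd hcontra (by decide)

lemma exists_moves_forall_normParity_eq_zero (k : ℕ) (w : Fin n → ZOmega)
    (hw : (2 : ℤ√2) ∣ ∑ p, norm (w p)) :
    ∃ w', Moves k w w' ∧ ∀ p, (res (w' p)).normParity = 0 := by
  suffices ∀ (s : Finset (Fin n)) (w : Fin n → ZOmega), (∀ p ∉ s, (res (w p)).normParity = 0) →
      (2 : ℤ√2) ∣ ∑ p, norm (w p) → ∃ w', Moves k w w' ∧ ∀ p, (res (w' p)).normParity = 0 from
    this Finset.univ w (by simp) hw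
  intro s
  induction s using Finset.strongInduction with
  | H s ih =>
  intro w hs hw
  by_cases hodd : ∀ j, (res (w j)).normParity = 0
  · exact ⟨w, Moves.refl k w, hodd⟩
  obtain ⟨j, hj⟩ := not_forall.1 hodd
  obtain ⟨l, hlj, hl⟩ := exists_ne_normParity_eq hw hj
  obtain ⟨y, y', hmv, hy, hy'⟩ := exists_moves_pair k hlj.symm hj hl.symm
  have hjs : j ∈ s := by_contra fun h => hj (hs j h)
  have hls : l ∈ s.erase j := Finset.mem_erase.2 ⟨hlj, by_contra fun h => hj (hl ▸ hs l h)⟩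
  have hs' : ∀ p ∉ (s.erase j).erase l, (res (update (update w j y) l y' p)).normParity = 0 := by
    intro p hp
    by_cases hpl : p = l
    · simp [hpl, hy']
    by_cases hpj : p = j
    · simp [hpj, hlj.symm, hy]
    rw [update_of_ne hpl, update_of_ne hpj]
    exact hs p (by simpa [hpl, hpj] using hp)
  obtain ⟨w', hmv', hw'⟩ := ih ((s.erase j).erase l)
    ((Finset.erase_ssubset hls).trans_subset (Finset.erase_subset j s)) _ hs' (by rwa [hmv.2])
  exact ⟨w', hmv.trans hmv', hw'⟩

lemma exists_gateReach_pred (k : ℕ) {w : Fin n → ZOmega} (hw : ∑ p, norm (w p) = 2 ^ (k + 1)) :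
    ∃ w', GateReach (scaledVec (k + 1) w) (scaledVec k w') ∧ ∑ p, norm (w' p) = 2 ^ k := by
  obtain ⟨w₁, ⟨hreach, hsum⟩, hpar⟩ := exists_moves_forall_normParity_eq_zero (k + 1) w
    (by rw [hw, pow_succ']; exact dvd_mul_right 2 _)
  choose y hy using fun p => exists_eq_mulSqrt2 (hpar p)
  refine ⟨y, ?_, ?_⟩
  · convert hreach using 1
    ext p
    have h0 : (Real.sqrt 2 : ℂ) ≠ 0 := by simp
    simp only [scaledVec, Function.comp_apply, hy p, toC_mulSqrt2, pow_succ]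
    field_simp
  · simp only [hy, norm_mulSqrt2, ← Finset.mul_sum, hw, pow_succ'] at hsum
    simp only [Zsqrtd.ext_iff, Zsqrtd.re_mul, Zsqrtd.im_mul, Zsqrtd.re_ofNat,
      Zsqrtd.im_ofNat] at hsum ⊢
    omega

lemma gateReach_of_sum_norm_eq_one {w : Fin n → ZOmega} (hw : ∑ p, norm (w p) = 1) :
    GateReach (scaledVec 0 w) (fun p : Fin n => if (p : ℕ) = 0 then (1 : ℂ) else 0) := by
  classical
  obtain ⟨j, hj, hzero⟩ := Fintype.exists_eq_one_of_sum_eq_one (fun p => (norm (w p)).re)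
    (fun p => by simp only [norm]; positivity) (by rw [← Zsqrtd.re_sum, hw]; rfl)
  obtain ⟨m, hm⟩ := exists_omega_pow_mul_toC_eq_one hj
  have hsingle : update (scaledVec 0 w) j (ω ^ m * scaledVec 0 w j) = Pi.single j 1 := by
    ext p
    by_cases hp : p = j
    · simp [hp, scaledVec, hm]
    · simp [hp, scaledVec, toC_eq_zero_of_norm_re_eq_zero (hzero p hp)]
  let i : Fin n := ⟨0, j.pos⟩
  have htarget : (fun p : Fin n => if (p : ℕ) = 0 then (1 : ℂ) else 0) = Pi.single i 1 := by
    ext p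
    simp [Pi.single_apply, i, Fin.ext_iff]
  rw [htarget]
  refine (hsingle ▸ gateReach_update_omega_pow j m (scaledVec 0 w)).trans ?_
  by_cases hij : i = j
  · rw [hij]
    exact .refl _
  · convert gateReach_swap hij (Pi.single j (1 : ℂ)) using 1
    ext p
    by_cases hp : p = j
    · simp [hp, Ne.symm hij]
    · by_cases hpi : p = i <;> simp [hp, hpi, hij]

lemma gateReach_of_sum_norm_eq_two_pow (k : ℕ) {w : Fin n → ZOmega}
    (hw : ∑ p, norm (w p) = 2 ^ k) :
    GateReach (scaledVec k w) (fun p : Fin n => if (p : ℕ) = 0 then (1 : ℂ) else 0) := by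
  induction k generalizing w with
  | zero => exact gateReach_of_sum_norm_eq_one hw
  | succ k ih =>
    obtain ⟨w', hreach, hw'⟩ := exists_gateReach_pred k hw
    exact hreach.trans (ih hw')

end ZOmega

/-- Column lemma: for every unit vector `u ∈ 𝔻[ω]^n` there is a finite sequence
`U₁, …, U_h` of one- and two-level matrices of types `X`, `H`, `T`, `ω` with
`U₁⋯U_h u = e₁`, the first standard basis vector. -/
theorem stmt9 (n : ℕ) (u : Fin n → ℂ) (hu : ∀ j, inDω (u j))
    (hnorm : ∑ j, Complex.normSq (u j) = 1) :
    ∃ L : List (Matrix (Fin n) (Fin n) ℂ),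
      (∀ M ∈ L, IsLevelGen M) ∧
      L.prod.mulVec u = fun p : Fin n => if (p : ℕ) = 0 then (1 : ℂ) else 0 := by
  obtain ⟨k, w, rfl⟩ := ZOmega.exists_eq_scaledVec hu
  exact (ZOmega.gateReach_of_sum_norm_eq_two_pow k (ZOmega.sum_norm_eq_two_pow hnorm)).exists_list
end
end

section
/- For all n ≥ 1 and k ∈ ℕ, the set of unitary 2^n × 2^n complex matrices U such that √2^k·U has all entries in ℤ[ω] (i.e., with denominator exponent k) is finite, of cardinality at most 2^(4^n·(4+2k)). -/
noncomputable section

/-! If `U` is unitary and `√2^k U` has entries in `ℤ[ω]`, write an entry of a row as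
`√2^k U i j = aω³ + bω² + cω + d`. Its squared modulus is `A + B√2` with
`A = a² + b² + c² + d²`, and the Galois conjugate `A - B√2` is also a squared modulus, hence
nonnegative. The row sums to `2^k`, so by irrationality of `√2` the `B`'s sum to zero and the
conjugates sum to `2^k` as well; averaging the two bounds gives `A ≤ 2^k`. Each entry is thus
one of the lattice points of the `4`-ball of squared radius `N = 2^k`, and there are at most
`16 N²` of those: the ball lies in a product of two discs, each with at most `4N` lattice points
(column by column, by AM-GM, once `N ≥ 25`; by enumeration for smaller `N`). -/

open Finset Complex

lemma ω_sq : ω ^ 2 = I := by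
  have h : ((√2 : ℝ) : ℂ) ^ 2 = 2 := by exact_mod_cast Real.sq_sqrt zero_le_two
  rw [ω, div_pow, h, add_sq, I_sq]
  ring

def zω (q : (ℤ × ℤ) × (ℤ × ℤ)) : ℂ := q.1.1 * ω ^ 3 + q.1.2 * ω ^ 2 + q.2.1 * ω + q.2.2

lemma inZω_iff {t : ℂ} : inZω t ↔ ∃ q, t = zω q :=
  ⟨fun ⟨a, b, c, d, h⟩ => ⟨((a, b), (c, d)), h⟩, fun ⟨_, h⟩ => ⟨_, _, _, _, h⟩⟩

def sqSum (q : (ℤ × ℤ) × (ℤ × ℤ)) : ℤ := q.1.1 ^ 2 + q.1.2 ^ 2 + q.2.1 ^ 2 + q.2.2 ^ 2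

def crossSum (q : (ℤ × ℤ) × (ℤ × ℤ)) : ℤ := q.2.2 * (q.2.1 - q.1.1) + q.1.2 * (q.2.1 + q.1.1)

lemma normSq_zω (q : (ℤ × ℤ) × (ℤ × ℤ)) : normSq (zω q) = sqSum q + crossSum q * √2 := by
  obtain ⟨⟨a, b⟩, ⟨c, d⟩⟩ := q
  have h2 : √2 ^ 2 = 2 := Real.sq_sqrt zero_le_two
  have hz : zω ((a, b), (c, d)) = ⟨d + (c - a) * √2 / 2, b + (c + a) * √2 / 2⟩ := by
    rw [zω, pow_succ, ω_sq, ω]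
    apply Complex.ext <;>
      simp only [add_re, add_im, mul_re, mul_im, intCast_re, intCast_im, I_re, I_im, one_re, one_im,
        div_ofReal_re, div_ofReal_im] <;>
      field_simp
    · linear_combination (a - c) * h2
    · linear_combination -(c + a) * h2
  rw [hz, normSq_mk, sqSum, crossSum]
  push_cast
  linear_combination (a ^ 2 + c ^ 2) / 2 * h2

-- `((-a, b), (-c, d))` is the image of `((a, b), (c, d))` under the automorphism `ω ↦ -ω`.
lemma sqSum_sub_crossSum_mul_sqrt_two_nonneg (q : (ℤ × ℤ) × (ℤ × ℤ)) :
    0 ≤ (sqSum q : ℝ) - crossSum q * √2 := by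
  obtain ⟨⟨a, b⟩, ⟨c, d⟩⟩ := q
  have h := normSq_zω ((-a, b), (-c, d))
  simp only [sqSum, crossSum] at h ⊢
  push_cast at h ⊢
  linarith [normSq_nonneg (zω ((-a, b), (-c, d)))]

lemma Int.eq_zero_of_add_mul_sqrt_two_eq {a b c : ℤ} (h : a + b * √2 = c) : b = 0 := by
  by_contra hb
  refine ((irrational_sqrt_two.mul_intCast hb).add_intCast a).ne_int c ?_
  rw [← h]
  ring

lemma le_of_sum_add_mul_sqrt_two_eq {ι : Type*} {s : Finset ι} {A B : ι → ℤ} {M : ℤ}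
    (hplus : ∀ j ∈ s, 0 ≤ A j + B j * √2) (hminus : ∀ j ∈ s, 0 ≤ A j - B j * √2)
    (hsum : ∑ j ∈ s, (A j + B j * √2) = M) {j : ι} (hj : j ∈ s) : A j ≤ M := by
  have hsum' : ((∑ j ∈ s, A j : ℤ) : ℝ) + ((∑ j ∈ s, B j : ℤ) : ℝ) * √2 = M := by
    rw [← hsum, sum_add_distrib, ← sum_mul, Int.cast_sum, Int.cast_sum]
  have hB : ((∑ j ∈ s, B j : ℤ) : ℝ) = 0 := by
    exact_mod_cast Int.eq_zero_of_add_mul_sqrt_two_eq hsum'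
  have hconj : ∑ j ∈ s, ((A j : ℝ) - B j * √2) = M := by
    rw [sum_sub_distrib, ← sum_mul]
    push_cast at hsum' hB
    rw [hB] at hsum' ⊢
    linarith
  have h1 := single_le_sum hplus hj
  have h2 := single_le_sum hminus hj
  have : (A j : ℝ) ≤ M := by linarith
  exact_mod_cast this

lemma sum_normSq_of_mem_unitaryGroup {m : Type*} [Fintype m] [DecidableEq m] {U : Matrix m m ℂ}
    (hU : U ∈ Matrix.unitaryGroup m ℂ) (i : m) : ∑ j, normSq (U i j) = 1 := by
  have h := congrFun (congrFun (Matrix.mem_unitaryGroup_iff.mp hU) i) i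
  simp only [Matrix.mul_apply, Matrix.star_apply, star_def, mul_conj, Matrix.one_apply_eq] at h
  exact_mod_cast h

lemma exists_zω_sqSum_le {m : Type*} [Fintype m] [DecidableEq m] {k : ℕ} {U : Matrix m m ℂ}
    (hU : U ∈ Matrix.unitaryGroup m ℂ) (hZ : ∀ i j, inZω ((√2 : ℂ) ^ k * U i j)) (i j : m) :
    ∃ q, (√2 : ℂ) ^ k * U i j = zω q ∧ sqSum q ≤ 2 ^ k := by
  choose q hq using fun j => inZω_iff.mp (hZ i j)
  refine ⟨q j, hq j, le_of_sum_add_mul_sqrt_two_eq (s := univ) (B := fun j => crossSum (q j))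
    (fun j _ => ?_) (fun j _ => sqSum_sub_crossSum_mul_sqrt_two_nonneg _) ?_ (mem_univ j)⟩
  · exact normSq_zω (q j) ▸ normSq_nonneg _
  · calc ∑ j, ((sqSum (q j) : ℝ) + crossSum (q j) * √2)
        = ∑ j, normSq ((√2 : ℂ) ^ k * U i j) := by simp only [hq, normSq_zω]
      _ = ∑ j, 2 ^ k * normSq (U i j) := by
        simp only [map_mul, map_pow, normSq_ofReal, Real.mul_self_sqrt zero_le_two]
      _ = ((2 ^ k : ℤ) : ℝ) := by
        rw [← mul_sum, sum_normSq_of_mem_unitaryGroup hU, mul_one, Int.cast_pow, Int.cast_ofNat]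

lemma mem_Icc_sqrt_of_sq_le {x : ℤ} {N : ℕ} (h : x ^ 2 ≤ N) :
    x ∈ Icc (-(N.sqrt : ℤ)) N.sqrt := by
  have : x.natAbs ≤ N.sqrt := Nat.le_sqrt'.2 (by zify; rwa [sq_abs])
  rw [mem_Icc]
  omega

def latticeDisc (N : ℕ) : Finset (ℤ × ℤ) :=
  (Icc (-(N.sqrt : ℤ)) N.sqrt ×ˢ Icc (-(N.sqrt : ℤ)) N.sqrt).filter
    fun p => p.1 ^ 2 + p.2 ^ 2 ≤ N

lemma mem_latticeDisc {N : ℕ} {p : ℤ × ℤ} : p ∈ latticeDisc N ↔ p.1 ^ 2 + p.2 ^ 2 ≤ N := by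
  refine ⟨fun h => (mem_filter.1 h).2, fun h => mem_filter.2 ⟨mem_product.2 ⟨?_, ?_⟩, h⟩⟩ <;>
    apply mem_Icc_sqrt_of_sq_le <;> nlinarith [sq_nonneg p.1, sq_nonneg p.2]

lemma sum_Icc_neg_sq (s : ℕ) :
    3 * ∑ a ∈ Icc (-(s : ℤ)) s, a ^ 2 = s * (s + 1) * (2 * s + 1) := by
  induction s with
  | zero => simp
  | succ s ih =>
    have hIcc : Icc (-((s + 1 : ℕ) : ℤ)) (s + 1 : ℕ)
        = insert (-(s + 1 : ℤ)) (insert (s + 1 : ℤ) (Icc (-(s : ℤ)) s)) := by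
      ext a
      simp only [mem_Icc, mem_insert]
      omega
    have h1 : -(s + 1 : ℤ) ∉ insert (s + 1 : ℤ) (Icc (-(s : ℤ)) s) := by
      simp only [mem_insert, mem_Icc]; omega
    have h2 : (s + 1 : ℤ) ∉ Icc (-(s : ℤ)) s := by simp only [mem_Icc]; omega
    rw [hIcc, sum_insert h1, sum_insert h2, mul_add, mul_add, ih]
    push_cast
    ring

lemma card_latticeDisc_fiber_le (N : ℕ) (a : ℤ) :
    #{p ∈ latticeDisc N | p.1 = a} ≤ 2 * (N - a.natAbs ^ 2).sqrt + 1 := by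
  calc #{p ∈ latticeDisc N | p.1 = a}
      ≤ #(Icc (-((N - a.natAbs ^ 2).sqrt : ℤ)) (N - a.natAbs ^ 2).sqrt) := by
        refine card_le_card_of_injOn Prod.snd (fun p hp => mem_Icc_sqrt_of_sq_le ?_) ?_
        · rw [mem_coe, mem_filter, mem_latticeDisc] at hp
          obtain ⟨hp, rfl⟩ := hp
          have ha : p.1.natAbs ^ 2 ≤ N := by zify; rw [sq_abs]; nlinarith [sq_nonneg p.2]
          push_cast [ha, sq_abs]
          linarith
        · intro p hp q hq hpq
          rw [mem_coe, mem_filter] at hp hq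
          exact Prod.ext (hp.2.trans hq.2.symm) hpq
    _ = 2 * (N - a.natAbs ^ 2).sqrt + 1 := by simp only [Int.card_Icc]; omega

lemma card_latticeDisc_le {N : ℕ} (hN : 25 ≤ N) : #(latticeDisc N) ≤ 4 * N := by
  set s := N.sqrt
  set r : ℤ → ℕ := fun a => (N - a.natAbs ^ 2).sqrt
  have hs5 : 5 ≤ s := Nat.le_sqrt'.2 hN
  have hsN : s ^ 2 ≤ N := Nat.sqrt_le' N
  have hcard : #(Icc (-(s : ℤ)) s) = 2 * s + 1 := by simp only [Int.card_Icc]; omega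
  have hcols : #(latticeDisc N) ≤ ∑ a ∈ Icc (-(s : ℤ)) s, (2 * r a + 1) := by
    rw [card_eq_sum_card_fiberwise (f := Prod.fst) fun p hp =>
      mem_Icc_sqrt_of_sq_le (N := N) (by nlinarith [mem_latticeDisc.1 hp, sq_nonneg p.2])]
    exact sum_le_sum fun a _ => card_latticeDisc_fiber_le N a
  have hamgm : ∀ a ∈ Icc (-(s : ℤ)) s, 2 * s * (r a : ℤ) ≤ N - a ^ 2 + s ^ 2 := by
    intro a ha
    have has : a.natAbs ≤ s := by rw [mem_Icc] at ha; omega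
    have haN : a.natAbs ^ 2 ≤ N := (Nat.pow_le_pow_left has 2).trans hsN
    have hr : r a ^ 2 ≤ N - a.natAbs ^ 2 := Nat.sqrt_le' _
    zify [haN] at hr
    rw [sq_abs] at hr
    nlinarith [sq_nonneg ((r a : ℤ) - s)]
  have hsum := sum_le_sum hamgm
  rw [← mul_sum, sum_add_distrib, sum_sub_distrib, sum_const, sum_const, hcard, nsmul_eq_mul,
    nsmul_eq_mul] at hsum
  rw [sum_add_distrib, ← mul_sum, sum_const, hcard, smul_eq_mul, mul_one] at hcols
  have hQ := sum_Icc_neg_sq s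
  zify at hcols hsN hs5 hsum ⊢
  have key : (s : ℤ) * #(latticeDisc N) ≤ s * (4 * N) := by
    nlinarith [mul_le_mul_of_nonneg_left hcols (by positivity : (0 : ℤ) ≤ s),
      mul_nonneg (sub_nonneg.2 hs5) (by positivity : (0 : ℤ) ≤ s * (2 * s + 1)),
      mul_nonneg (sub_nonneg.2 hsN) (by linarith : (0 : ℤ) ≤ 6 * s - 3)]
  exact le_of_mul_le_mul_left key (by positivity)

lemma card_latticeDisc_two_pow_le {k : ℕ} (hk : 2 ≤ k) : #(latticeDisc (2 ^ k)) ≤ 2 ^ (k + 2) := by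
  obtain rfl | rfl | rfl | hk5 : k = 2 ∨ k = 3 ∨ k = 4 ∨ 5 ≤ k := by omega
  · rw [latticeDisc, ← (Nat.eq_sqrt'.2 ⟨by norm_num, by norm_num⟩ : 2 = Nat.sqrt (2 ^ 2))]; decide
  · rw [latticeDisc, ← (Nat.eq_sqrt'.2 ⟨by norm_num, by norm_num⟩ : 2 = Nat.sqrt (2 ^ 3))]; decide
  · rw [latticeDisc, ← (Nat.eq_sqrt'.2 ⟨by norm_num, by norm_num⟩ : 4 = Nat.sqrt (2 ^ 4))]; decide
  · calc #(latticeDisc (2 ^ k)) ≤ 4 * 2 ^ k :=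
          card_latticeDisc_le ((Nat.pow_le_pow_right two_pos hk5).trans' (by norm_num))
      _ = 2 ^ (k + 2) := by ring

def latticeBall4 (N : ℕ) : Finset ((ℤ × ℤ) × (ℤ × ℤ)) :=
  (latticeDisc N ×ˢ latticeDisc N).filter fun q => sqSum q ≤ N

lemma mem_latticeBall4 {N : ℕ} {q : (ℤ × ℤ) × (ℤ × ℤ)} : q ∈ latticeBall4 N ↔ sqSum q ≤ N := by
  refine ⟨fun h => (mem_filter.1 h).2, fun h => mem_filter.2 ⟨mem_product.2 ⟨?_, ?_⟩, h⟩⟩ <;>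
    rw [mem_latticeDisc] <;> rw [sqSum] at h <;>
    nlinarith [sq_nonneg q.1.1, sq_nonneg q.1.2, sq_nonneg q.2.1, sq_nonneg q.2.2]

lemma card_latticeBall4_two_pow_le (k : ℕ) : #(latticeBall4 (2 ^ k)) ≤ 2 ^ (4 + 2 * k) := by
  obtain rfl | rfl | hk : k = 0 ∨ k = 1 ∨ 2 ≤ k := by omega
  · rw [latticeBall4, latticeDisc,
      ← (Nat.eq_sqrt'.2 ⟨by norm_num, by norm_num⟩ : 1 = Nat.sqrt (2 ^ 0))]
    decide
  · rw [latticeBall4, latticeDisc,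
      ← (Nat.eq_sqrt'.2 ⟨by norm_num, by norm_num⟩ : 1 = Nat.sqrt (2 ^ 1))]
    decide
  · calc #(latticeBall4 (2 ^ k)) ≤ #(latticeDisc (2 ^ k)) * #(latticeDisc (2 ^ k)) :=
          (card_filter_le _ _).trans (card_product _ _).le
      _ ≤ 2 ^ (k + 2) * 2 ^ (k + 2) :=
          Nat.mul_le_mul (card_latticeDisc_two_pow_le hk) (card_latticeDisc_two_pow_le hk)
      _ = 2 ^ (4 + 2 * k) := by ring

def denomExpUnitaries (m : Type*) [Fintype m] [DecidableEq m] (k : ℕ) : Set (Matrix m m ℂ) :=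
  {U | U ∈ Matrix.unitaryGroup m ℂ ∧ ∀ i j, inZω ((√2 : ℂ) ^ k * U i j)}

section DenomExpUnitaries

variable (m : Type*) [Fintype m] [DecidableEq m] (k : ℕ)

lemma denomExpUnitaries_subset_range : denomExpUnitaries m k ⊆
    Set.range fun f : m → m → latticeBall4 (2 ^ k) => Matrix.of fun i j => zω (f i j) / √2 ^ k := by
  rintro U ⟨hU, hZ⟩
  choose q hq hle using exists_zω_sqSum_le hU hZ
  refine ⟨fun i j => ⟨q i j, mem_latticeBall4.2 (by exact_mod_cast hle i j)⟩, ?_⟩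
  ext i j
  have h0 : (√2 : ℂ) ^ k ≠ 0 := pow_ne_zero _ (by exact_mod_cast Real.sqrt_ne_zero'.2 two_pos)
  simp [← hq i j, h0]

lemma finite_denomExpUnitaries : (denomExpUnitaries m k).Finite :=
  (Set.finite_range _).subset (denomExpUnitaries_subset_range m k)

lemma ncard_denomExpUnitaries_le :
    (denomExpUnitaries m k).ncard ≤ 2 ^ (Fintype.card m ^ 2 * (4 + 2 * k)) :=
  calc (denomExpUnitaries m k).ncard
      ≤ Nat.card (Set.range fun f : m → m → latticeBall4 (2 ^ k) =>
          Matrix.of fun i j => zω (f i j) / √2 ^ k) := by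
        rw [Nat.card_coe_set_eq]
        exact Set.ncard_le_ncard (denomExpUnitaries_subset_range m k) (Set.finite_range _)
    _ ≤ Nat.card (m → m → latticeBall4 (2 ^ k)) := Finite.card_range_le _
    _ = #(latticeBall4 (2 ^ k)) ^ (Fintype.card m ^ 2) := by
        simp only [Nat.card_eq_fintype_card, Fintype.card_pi, Fintype.card_coe, prod_const,
          card_univ]
        ring
    _ ≤ (2 ^ (4 + 2 * k)) ^ (Fintype.card m ^ 2) :=
        Nat.pow_le_pow_left (card_latticeBall4_two_pow_le k) _
    _ = 2 ^ (Fintype.card m ^ 2 * (4 + 2 * k)) := by rw [← pow_mul, mul_comm]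

end DenomExpUnitaries

theorem stmt18_general (n : ℕ) (k : ℕ) :
    {U : Matrix (Fin n → Fin 2) (Fin n → Fin 2) ℂ |
        U ∈ Matrix.unitaryGroup (Fin n → Fin 2) ℂ ∧
        ∀ i j, inZω ((Real.sqrt 2 : ℂ) ^ k * U i j)}.Finite ∧
    {U : Matrix (Fin n → Fin 2) (Fin n → Fin 2) ℂ |
        U ∈ Matrix.unitaryGroup (Fin n → Fin 2) ℂ ∧
        ∀ i j, inZω ((Real.sqrt 2 : ℂ) ^ k * U i j)}.ncard ≤ 2 ^ (4 ^ n * (4 + 2 * k)) := by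
  have hcard : Fintype.card (Fin n → Fin 2) ^ 2 = 4 ^ n := by
    rw [Fintype.card_fun, Fintype.card_fin, Fintype.card_fin, ← pow_mul, mul_comm, pow_mul]
    norm_num
  refine ⟨finite_denomExpUnitaries _ k, ?_⟩
  rw [← hcard]
  exact ncard_denomExpUnitaries_le _ k

/-- For `n ≥ 1` and `k ∈ ℕ`, the set of unitary `2^n × 2^n` matrices with denominator
exponent `k` (i.e. such that `√2^k·U` has all entries in `ℤ[ω]`) is finite, of cardinality
at most `2^(4^n·(4+2k))`. -/
theorem stmt18 (n : ℕ) (hn : 1 ≤ n) (k : ℕ) :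
    {U : Matrix (Fin n → Fin 2) (Fin n → Fin 2) ℂ |
        U ∈ Matrix.unitaryGroup (Fin n → Fin 2) ℂ ∧
        ∀ i j, inZω ((Real.sqrt 2 : ℂ) ^ k * U i j)}.Finite ∧
    {U : Matrix (Fin n → Fin 2) (Fin n → Fin 2) ℂ |
        U ∈ Matrix.unitaryGroup (Fin n → Fin 2) ℂ ∧
        ∀ i j, inZω ((Real.sqrt 2 : ℂ) ^ k * U i j)}.ncard ≤ 2 ^ (4 ^ n * (4 + 2 * k)) :=
  stmt18_general n k
end
end
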